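/- arXiv:2602.12523 — 2 statements merged into one kernel-verified Lean document; each statement's English description precedes it below -/
import Mathlib

section
/- Fix n ∈ ℕ. For every (n_1, n_2) ∈ ℕ² with n_1 + n_2 = n, one has f(⌈n/2⌉, ⌊n/2⌋) ≤ f(n_1, n_2), and the inequality is strict whenever |n_1 − n_2| > 1. -/
namespace BallsBins

/-- `f a b` is the expected number of balls remaining in the two-bin uniform removal
process started from the assignment `(a, b)`:
`f (a, 0) = a`, `f (0, b) = b`, and `f (a, b) = ½ f (a-1, b) + ½ f (a, b-1)` for `a, b ≥ 1`. -/
noncomputable def f : ℕ → ℕ → ℝ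
  | a, 0 => a
  | 0, b => b
  | a + 1, b + 1 => (1 / 2) * f a (b + 1) + (1 / 2) * f (a + 1) b

lemma f_a0 (a : ℕ) : f a 0 = a := by cases a <;> simp [f]

lemma f_0b (b : ℕ) : f 0 b = b := by cases b <;> simp [f]

lemma f_rec (a b : ℕ) : f (a + 1) (b + 1) = (1 / 2) * f a (b + 1) + (1 / 2) * f (a + 1) b := by
  simp [f]

lemma f_symm_aux : ∀ n a b, a + b = n → f a b = f b a := by
  intro n
  induction n using Nat.strong_induction_on with
  | _ n ih =>
    intro a b hab
    match a, b with
    | a, 0 => rw [f_a0, f_0b]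
    | 0, b => rw [f_a0, f_0b]
    | a + 1, b + 1 =>
      rw [f_rec, f_rec]
      rw [ih (a + b + 1) (by omega) a (b + 1) (by omega),
        ih (a + b + 1) (by omega) (a + 1) b (by omega)]
      ring

lemma f_symm (a b : ℕ) : f a b = f b a := f_symm_aux (a + b) a b rfl

lemma f_one : ∀ a : ℕ, f (a + 1) 1 = a + (1 / 2 : ℝ) ^ a := by
  intro a
  induction a with
  | zero => simp [f_rec, f_0b, f_a0]; norm_num
  | succ a ih =>
    rw [f_rec, ih, f_a0]
    push_cast
    ring

lemma half_pow_le_one (a : ℕ) : (1 / 2 : ℝ) ^ a ≤ 1 :=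
  pow_le_one₀ (by norm_num) (by norm_num)

lemma half_pow_pos (a : ℕ) : (0 : ℝ) < (1 / 2 : ℝ) ^ a := by positivity

lemma f_exch_le : ∀ n a b, a + b = n → b ≤ a → f a (b + 1) ≤ f (a + 1) b := by
  intro n
  induction n using Nat.strong_induction_on with
  | _ n ih =>
    intro a b hab hba
    match a, b with
    | 0, 0 => simp [f_0b, f_a0]
    | a + 1, 0 =>
      rw [f_one, f_a0]
      have := half_pow_le_one a
      push_cast
      linarith
    | a + 1, b + 1 =>
      rw [f_rec a (b + 1), f_rec (a + 1) b]
      have key : f a (b + 2) ≤ f (a + 2) b := by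
        rcases eq_or_lt_of_le (show b ≤ a by omega) with h | h
        · subst h
          exact le_of_eq (f_symm b (b + 2))
        · calc f a (b + 2) ≤ f (a + 1) (b + 1) :=
                ih (a + b + 1) (by omega) a (b + 1) (by omega) (by omega)
            _ ≤ f (a + 2) b := ih (a + b + 1) (by omega) (a + 1) b (by omega) (by omega)
      linarith

lemma f_exch_lt : ∀ n a b, a + b = n → b + 1 ≤ a → f a (b + 1) < f (a + 1) b := by
  intro n
  induction n using Nat.strong_induction_on with
  | _ n ih =>
    intro a b hab hba
    match a, b with
    | a + 1, 0 =>
      rw [f_one, f_a0]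
      have := half_pow_le_one a
      push_cast
      linarith
    | a + 1, b + 1 =>
      rw [f_rec a (b + 1), f_rec (a + 1) b]
      have h1 : f a (b + 2) ≤ f (a + 1) (b + 1) :=
        f_exch_le (a + b + 1) a (b + 1) (by omega) (by omega)
      have h2 : f (a + 1) (b + 1) < f (a + 2) b :=
        ih (a + b + 1) (by omega) (a + 1) b (by omega) (by omega)
      linarith

lemma f_balanced_le : ∀ d n₁ n₂, n₁ = n₂ + d →
    f ((n₁ + n₂ + 1) / 2) ((n₁ + n₂) / 2) ≤ f n₁ n₂ := by
  intro d
  induction d using Nat.strong_induction_on with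
  | _ d ih =>
    intro n₁ n₂ hd
    rcases le_or_gt d 1 with h | h
    · interval_cases d
      · have h1 : (n₁ + n₂ + 1) / 2 = n₁ := by omega
        have h2 : (n₁ + n₂) / 2 = n₂ := by omega
        rw [h1, h2]
      · have h1 : (n₁ + n₂ + 1) / 2 = n₁ := by omega
        have h2 : (n₁ + n₂) / 2 = n₂ := by omega
        rw [h1, h2]
    · -- d ≥ 2, so n₁ ≥ n₂ + 2; step to (n₁ - 1, n₂ + 1)
      obtain ⟨a, rfl⟩ : ∃ a, n₁ = a + 1 := ⟨n₁ - 1, by omega⟩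
      have hstep : f a (n₂ + 1) < f (a + 1) n₂ :=
        f_exch_lt (a + n₂) a n₂ rfl (by omega)
      have hrec := ih (d - 2) (by omega) a (n₂ + 1) (by omega)
      have hsum : a + (n₂ + 1) = (a + 1) + n₂ := by omega
      rw [hsum] at hrec
      linarith

lemma f_balanced_lt : ∀ d n₁ n₂, n₁ = n₂ + d → 2 ≤ d →
    f ((n₁ + n₂ + 1) / 2) ((n₁ + n₂) / 2) < f n₁ n₂ := by
  intro d n₁ n₂ hd h2
  obtain ⟨a, rfl⟩ : ∃ a, n₁ = a + 1 := ⟨n₁ - 1, by omega⟩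
  have hstep : f a (n₂ + 1) < f (a + 1) n₂ :=
    f_exch_lt (a + n₂) a n₂ rfl (by omega)
  have hrec := f_balanced_le (d - 2) a (n₂ + 1) (by omega)
  have hsum : a + (n₂ + 1) = (a + 1) + n₂ := by omega
  rw [hsum] at hrec
  linarith

/-- For every `(n₁, n₂)` with `n₁ + n₂ = n`, the balanced assignment
`(⌈n/2⌉, ⌊n/2⌋)` satisfies `f (⌈n/2⌉, ⌊n/2⌋) ≤ f (n₁, n₂)`, with strict inequality
whenever `|n₁ - n₂| > 1`. -/
theorem balanced_two_bins_minimizes (n n₁ n₂ : ℕ) (h : n₁ + n₂ = n) :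
    f ((n + 1) / 2) (n / 2) ≤ f n₁ n₂ ∧
      (1 < |(n₁ : ℤ) - (n₂ : ℤ)| → f ((n + 1) / 2) (n / 2) < f n₁ n₂) := by
  subst h
  rcases le_or_gt n₂ n₁ with hle | hlt
  · constructor
    · exact f_balanced_le (n₁ - n₂) n₁ n₂ (by omega)
    · intro habs
      have hd : 2 ≤ n₁ - n₂ := by
        rcases lt_abs.mp habs with h' | h' <;> omega
      exact f_balanced_lt (n₁ - n₂) n₁ n₂ (by omega) hd
  · rw [f_symm n₁ n₂]
    have hsum : n₁ + n₂ = n₂ + n₁ := by omega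
    rw [hsum]
    constructor
    · exact f_balanced_le (n₂ - n₁) n₂ n₁ (by omega)
    · intro habs
      have hd : 2 ≤ n₂ - n₁ := by
        rcases lt_abs.mp habs with h' | h' <;> omega
      exact f_balanced_lt (n₂ - n₁) n₂ n₁ (by omega) hd

end BallsBins
end

section
/- X_{n⃗} = X_{n⃗ − e_1 + e_i} pointwise on the event F_∅ \ C_a, i.e., on sample points where the last two non-empty bins include neither bin 1 nor bin i and condition (a) is not triggered at S(n⃗), the processes started from n⃗ and from n⃗ − e_1 + e_i leave the same number of remaining balls. -/
/-! The gap `content b1 - content i` starts at `n b1 - n i ≥ 1` and drops by at most one per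
round, so condition (a) holds at or before any round at which `b1` is empty and `i` is not
overdrawn. As (a) does not hold at round `S`, the gap is still at least `2` there. Hence on `F_∅ \ C_a` some round
with at least two non-empty bins has `b1` empty and `i` overdrawn: the round at which only the
final two bins remain if `i` is already overdrawn then, and otherwise `S`, where (b) holds.
From that round on, moving one ball from `b1` to `i` changes no bin's positive part, so both
processes have the same non-empty bins and stop at the same round with the same balls left;
before it, both keep at least two non-empty bins. -/

open MeasureTheory ProbabilityTheory ENNReal

namespace BallsBins

variable {k : ℕ}

/-- Number of times bin `j` is selected during the first `t` rounds of `ω`. -/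
def numSel (ω : ℕ → Fin k) (j : Fin k) (t : ℕ) : ℕ :=
  ((Finset.range t).filter (fun s => ω s = j)).card

/-- Content (possibly negative) of bin `j` at the end of round `t`, started from `n`. -/
def content (n : Fin k → ℕ) (ω : ℕ → Fin k) (j : Fin k) (t : ℕ) : ℤ :=
  (n j : ℤ) - numSel ω j t

/-- The set of non-empty bins at the end of round `t`. -/
def nonemptyBins (n : Fin k → ℕ) (ω : ℕ → Fin k) (t : ℕ) : Finset (Fin k) :=
  Finset.univ.filter (fun j => 0 < content n ω j t)

/-- `T n ω` : the first round at which a unique non-empty bin remains (`⊤` if never). -/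
noncomputable def T (n : Fin k → ℕ) (ω : ℕ → Fin k) : ℕ∞ :=
  sInf ((fun t : ℕ => (t : ℕ∞)) '' {t | (nonemptyBins n ω t).card = 1})

/-- `X n ω` : the number of balls remaining when the process stops, i.e. at round `T n ω`. -/
noncomputable def X (n : Fin k → ℕ) (ω : ℕ → Fin k) : ℕ :=
  ∑ j, (n j - numSel ω j (T n ω).toNat)

/-- Condition (a): bin `b1` contains exactly one ball more than bin `i` at the end of round `t`. -/
def condA (n : Fin k → ℕ) (b1 i : Fin k) (ω : ℕ → Fin k) (t : ℕ) : Prop :=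
  content n ω b1 t = content n ω i t + 1

/-- Condition (b): at the end of round `t` there are exactly two non-empty bins and one of
them contains exactly one ball. -/
def condB (n : Fin k → ℕ) (ω : ℕ → Fin k) (t : ℕ) : Prop :=
  (nonemptyBins n ω t).card = 2 ∧ ∃ j, content n ω j t = 1

/-- `S n b1 i ω` : the first round at the end of which condition (a) or (b) occurs. -/
noncomputable def S (n : Fin k → ℕ) (b1 i : Fin k) (ω : ℕ → Fin k) : ℕ∞ :=
  sInf ((fun t : ℕ => (t : ℕ∞)) '' {t | condA n b1 i ω t ∨ condB n ω t})

/-- `Ca n b1 i` : the event that condition (a) occurs at round `S n b1 i`. -/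
def Ca (n : Fin k → ℕ) (b1 i : Fin k) : Set (ℕ → Fin k) :=
  {ω | ∃ t : ℕ, S n b1 i ω = (t : ℕ∞) ∧ condA n b1 i ω t}

/-- The event that bins `p` and `q` are the last two non-empty bins. -/
def lastTwo (n : Fin k → ℕ) (p q : Fin k) : Set (ℕ → Fin k) :=
  {ω | ∃ t : ℕ, nonemptyBins n ω t = {p, q}}

/-- The first round at which condition (b) is triggered (`⊤` if never). -/
noncomputable def TB (n : Fin k → ℕ) (ω : ℕ → Fin k) : ℕ∞ :=
  sInf ((fun t : ℕ => (t : ℕ∞)) '' {t | condB n ω t})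

/-- `Fab n b1 j a b` : the event that bins `b1` and `j` are the last two non-empty bins and,
at the first round at which condition (b) is triggered, bins `b1` and `j` contain `a` and `b`
balls respectively. -/
def Fab (n : Fin k → ℕ) (b1 j : Fin k) (a b : ℕ) : Set (ℕ → Fin k) :=
  lastTwo n b1 j ∩
    {ω | ∃ t : ℕ, TB n ω = (t : ℕ∞) ∧ content n ω b1 t = (a : ℤ) ∧ content n ω j t = (b : ℤ)}

/-- The assignment `n - e_{b1} + e_i`. -/
def shift (n : Fin k → ℕ) (b1 i : Fin k) : Fin k → ℕ :=
  Function.update (Function.update n b1 (n b1 - 1)) i (n i + 1)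

/-- The uniform probability measure on `Fin k`. -/
noncomputable def unifFin (k : ℕ) : Measure (Fin k) := (k : ℝ≥0∞)⁻¹ • Measure.count

/-- `IsIIDUniform μ` : `μ` is a probability measure on `[k]^ℕ` under which the coordinates
are independent and each is uniformly distributed on `Fin k`; this uniquely characterizes
the product of uniform measures. -/
structure IsIIDUniform (μ : Measure (ℕ → Fin k)) : Prop where
  prob : IsProbabilityMeasure μ
  indep : iIndepFun (fun (t : ℕ) (ω : ℕ → Fin k) => ω t) μ
  unif : ∀ t : ℕ, μ.map (fun ω : ℕ → Fin k => ω t) = unifFin k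

/-- `Fempty n b1 i` : the event that the last two non-empty bins include neither `b1` nor `i`. -/
def Fempty (n : Fin k → ℕ) (b1 i : Fin k) : Set (ℕ → Fin k) :=
  {ω | ∃ p q : Fin k, p ≠ q ∧ p ∉ ({b1, i} : Set (Fin k)) ∧ q ∉ ({b1, i} : Set (Fin k)) ∧
    ω ∈ lastTwo n p q}

lemma exists_eq_of_sub_one_le {f : ℕ → ℤ} (hstep : ∀ t, f t - 1 ≤ f (t + 1)) {c : ℤ}
    (h0 : c ≤ f 0) {t₀ : ℕ} (ht₀ : f t₀ ≤ c) : ∃ t ≤ t₀, f t = c := by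
  induction t₀ with
  | zero => exact ⟨0, le_rfl, le_antisymm ht₀ h0⟩
  | succ t ih =>
    by_cases h : f t ≤ c
    · obtain ⟨s, hs, hfs⟩ := ih h
      exact ⟨s, by omega, hfs⟩
    · exact ⟨t + 1, le_rfl, by linarith [hstep t]⟩

lemma sInf_natCast_image {A : Set ℕ} (hA : A.Nonempty) :
    sInf ((fun t : ℕ => (t : ℕ∞)) '' A) = ((sInf A : ℕ) : ℕ∞) :=
  sInf_image.trans (ENat.natCast_sInf hA).symm

/-- The positive part of `content n ω j t` (truncated subtraction). -/
def remaining (n : Fin k → ℕ) (ω : ℕ → Fin k) (j : Fin k) (t : ℕ) : ℕ :=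
  n j - numSel ω j t

section Bins

variable {n m : Fin k → ℕ} {ω : ℕ → Fin k} {b1 i : Fin k}

lemma numSel_mono (ω : ℕ → Fin k) (j : Fin k) : Monotone (numSel ω j) := fun _ _ h =>
  Finset.card_le_card (Finset.filter_subset_filter _ (Finset.range_subset_range.2 h))

lemma content_succ (n : Fin k → ℕ) (ω : ℕ → Fin k) (j : Fin k) (t : ℕ) :
    content n ω j (t + 1) = content n ω j t - if ω t = j then 1 else 0 := by
  simp only [content, numSel, Finset.range_add_one, Finset.filter_insert]
  split_ifs
  · rw [Finset.card_insert_of_notMem (by simp)]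
    push_cast
    ring
  · simp

lemma mem_nonemptyBins {j : Fin k} {t : ℕ} : j ∈ nonemptyBins n ω t ↔ 0 < content n ω j t := by
  simp [nonemptyBins]

lemma content_nonpos_of_notMem_nonemptyBins {j : Fin k} {t : ℕ} (h : j ∉ nonemptyBins n ω t) :
    content n ω j t ≤ 0 :=
  not_lt.1 (mt mem_nonemptyBins.2 h)

lemma nonemptyBins_antitone (n : Fin k → ℕ) (ω : ℕ → Fin k) : Antitone (nonemptyBins n ω) :=
  fun t t' h j hj => by
    have := numSel_mono ω j h
    rw [mem_nonemptyBins, content] at hj ⊢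
    omega

lemma two_le_card_nonemptyBins_of_le {t t₀ : ℕ} (h₂ : 2 ≤ (nonemptyBins n ω t₀).card)
    (ht : t ≤ t₀) : 2 ≤ (nonemptyBins n ω t).card :=
  h₂.trans (Finset.card_le_card (nonemptyBins_antitone n ω ht))

lemma nonemptyBins_congr {t : ℕ} (h : ∀ j, remaining n ω j t = remaining m ω j t) :
    nonemptyBins n ω t = nonemptyBins m ω t := by
  ext j
  have := h j
  simp only [mem_nonemptyBins, content, remaining] at this ⊢
  omega

lemma remaining_eq_of_le {t₀ t : ℕ} (h : ∀ j, remaining n ω j t₀ = remaining m ω j t₀)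
    (ht : t₀ ≤ t) (j : Fin k) : remaining n ω j t = remaining m ω j t := by
  have := numSel_mono ω j ht
  have := h j
  simp only [remaining] at *
  omega

lemma le_T {t₀ : ℕ} (h₂ : 2 ≤ (nonemptyBins n ω t₀).card) : (t₀ : ℕ∞) ≤ T n ω := by
  refine le_sInf ?_
  rintro _ ⟨t, ht, rfl⟩
  refine Nat.cast_le.2 (not_lt.1 fun hlt => ?_)
  have h₁ : (nonemptyBins n ω t).card = 1 := ht
  have := two_le_card_nonemptyBins_of_le h₂ hlt.le
  omega

lemma T_eq_of_remaining_eq {t₀ : ℕ} (h : ∀ j, remaining n ω j t₀ = remaining m ω j t₀)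
    (h₂ : 2 ≤ (nonemptyBins n ω t₀).card) : T n ω = T m ω := by
  suffices {t | (nonemptyBins n ω t).card = 1} = {t | (nonemptyBins m ω t).card = 1} by
    simp only [T, this]
  ext t
  rcases le_total t t₀ with ht | ht
  · have hn := two_le_card_nonemptyBins_of_le h₂ ht
    have hm := two_le_card_nonemptyBins_of_le ((nonemptyBins_congr h).symm ▸ h₂) ht
    simp only [Set.mem_ofPred_eq]
    omega
  · simp only [Set.mem_ofPred_eq, nonemptyBins_congr (remaining_eq_of_le h ht)]

/-- The totals matter only when the process never stops: then `T = ⊤`, whose `toNat` is `0`,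
so `X` is the initial total. -/
theorem X_eq_of_remaining_eq {t₀ : ℕ} (hsum : ∑ j, n j = ∑ j, m j)
    (h : ∀ j, remaining n ω j t₀ = remaining m ω j t₀) (h₂ : 2 ≤ (nonemptyBins n ω t₀).card) :
    X n ω = X m ω := by
  change ∑ j, remaining n ω j (T n ω).toNat = ∑ j, remaining m ω j (T m ω).toNat
  rw [← T_eq_of_remaining_eq h h₂]
  rcases eq_or_ne (T n ω) ⊤ with htop | htop
  · simpa [htop, remaining, numSel] using hsum
  · have hle : t₀ ≤ (T n ω).toNat := by
      simpa using ENat.toNat_le_toNat (le_T h₂) htop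
    exact Finset.sum_congr rfl fun j _ => remaining_eq_of_le h hle j

lemma sum_shift (hb1i : b1 ≠ i) (hn : 1 ≤ n b1) : ∑ j, shift n b1 i j = ∑ j, n j := by
  have hupd : ∑ j, Function.update n b1 (n b1 - 1) j + 1 = ∑ j, n j := by
    rw [Finset.sum_update_of_mem (Finset.mem_univ b1),
      Finset.sum_eq_add_sum_sdiff_singleton_of_mem (Finset.mem_univ b1) n]
    omega
  rw [shift, Finset.sum_update_of_mem (Finset.mem_univ i), ← hupd,
    Finset.sum_eq_add_sum_sdiff_singleton_of_mem (Finset.mem_univ i)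
      (Function.update n b1 (n b1 - 1)), Function.update_of_ne hb1i.symm]
  omega

lemma remaining_shift {t : ℕ} (hb1i : b1 ≠ i) (hb1 : content n ω b1 t ≤ 0)
    (hi : content n ω i t < 0) (j : Fin k) : remaining (shift n b1 i) ω j t = remaining n ω j t := by
  simp only [remaining, content, shift] at *
  by_cases hji : j = i
  · subst hji
    simp only [Function.update_self]
    omega
  by_cases hjb1 : j = b1
  · subst hjb1
    simp only [Function.update_of_ne hji, Function.update_self]
    omega
  simp only [Function.update_of_ne hji, Function.update_of_ne hjb1]

lemma gap_sub_one_le (n : Fin k → ℕ) (ω : ℕ → Fin k) (b1 i : Fin k) (t : ℕ) :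
    content n ω b1 t - content n ω i t - 1 ≤ content n ω b1 (t + 1) - content n ω i (t + 1) := by
  simp only [content_succ]
  split_ifs <;> omega

lemma exists_condA_le (hlt : n i < n b1) {t₀ : ℕ}
    (h : content n ω b1 t₀ ≤ content n ω i t₀ + 1) : ∃ t ≤ t₀, condA n b1 i ω t := by
  obtain ⟨t, ht, hgap⟩ := exists_eq_of_sub_one_le
    (f := fun t => content n ω b1 t - content n ω i t) (gap_sub_one_le n ω b1 i) (c := 1)
    (by simp [content, numSel]; omega) (show content n ω b1 t₀ - content n ω i t₀ ≤ 1 by omega)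
  exact ⟨t, ht, by rw [condA]; omega⟩

lemma exists_S_eq {t₀ : ℕ} (h : condA n b1 i ω t₀ ∨ condB n ω t₀) :
    ∃ s ≤ t₀, S n b1 i ω = s ∧ (condA n b1 i ω s ∨ condB n ω s) :=
  ⟨_, Nat.sInf_le h, sInf_natCast_image ⟨t₀, h⟩,
    Nat.sInf_mem (s := {t | condA n b1 i ω t ∨ condB n ω t}) ⟨t₀, h⟩⟩

lemma content_add_two_le_of_S_eq (hlt : n i < n b1) {s : ℕ} (hS : S n b1 i ω = s)
    (hA : ¬ condA n b1 i ω s) : content n ω i s + 2 ≤ content n ω b1 s := by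
  by_contra hgap
  obtain ⟨t, hts, ht⟩ := exists_condA_le hlt (show content n ω b1 s ≤ content n ω i s + 1 by omega)
  have hst : S n b1 i ω ≤ t := sInf_le ⟨t, Or.inl ht, rfl⟩
  rw [hS, Nat.cast_le] at hst
  exact hA (le_antisymm hts hst ▸ ht)

theorem exists_content_b1_nonpos_content_i_neg (hlt : n i < n b1)
    (hω : ω ∈ Fempty n b1 i \ Ca n b1 i) :
    ∃ t, 2 ≤ (nonemptyBins n ω t).card ∧ content n ω b1 t ≤ 0 ∧ content n ω i t < 0 := by
  obtain ⟨⟨p, q, hpq, hp, hq, t₀, ht₀⟩, hCa⟩ := hω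
  simp only [Set.mem_insert_iff, Set.mem_singleton_iff, not_or] at hp hq
  have hout {j : Fin k} {t : ℕ} (hjp : j ≠ p) (hjq : j ≠ q) (h : nonemptyBins n ω t = {p, q}) :
      content n ω j t ≤ 0 :=
    content_nonpos_of_notMem_nonemptyBins (by simp [h, hjp, hjq])
  have hb1 {t : ℕ} := @hout b1 t (Ne.symm hp.1) (Ne.symm hq.1)
  have hi {t : ℕ} := @hout i t (Ne.symm hp.2) (Ne.symm hq.2)
  have hcard : ({p, q} : Finset (Fin k)).card = 2 := Finset.card_pair hpq
  rcases (hi ht₀).lt_or_eq with hneg | hzero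
  · exact ⟨t₀, by rw [ht₀, hcard], hb1 ht₀, hneg⟩
  -- Bin `i` is exactly empty at `t₀`, so condition (a) held by then and `S` is finite.
  obtain ⟨t₁, ht₁, hA⟩ := exists_condA_le hlt
    (show content n ω b1 t₀ ≤ content n ω i t₀ + 1 by linarith [hb1 ht₀])
  obtain ⟨s, hs, hS, hAB⟩ := exists_S_eq (Or.inl hA : condA n b1 i ω t₁ ∨ condB n ω t₁)
  have hnotA : ¬ condA n b1 i ω s := fun h => hCa ⟨s, hS, h⟩
  have hB := hAB.resolve_left hnotA
  have hs_bins : nonemptyBins n ω s = {p, q} :=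
    (Finset.eq_of_subset_of_card_le (ht₀ ▸ nonemptyBins_antitone n ω (hs.trans ht₁))
      (by rw [hB.1, hcard])).symm
  have hgap := content_add_two_le_of_S_eq hlt hS hnotA
  exact ⟨s, by rw [hB.1], hb1 hs_bins, by linarith [hb1 hs_bins]⟩

end Bins

/-- On the event `F_∅ \ Ca` — the last two non-empty bins include neither
bin `1` nor bin `i`, and condition (a) is not triggered at `S n` — the processes started
from `n` and from `n - e₁ + eᵢ` leave the same number of remaining balls. -/
theorem X_eq_on_Fempty
    {k : ℕ} (n : Fin k → ℕ) (b1 : Fin k)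
    (i : Fin k) (hi : n i + 2 ≤ n b1)
    (ω : ℕ → Fin k) (hω : ω ∈ Fempty n b1 i \ Ca n b1 i) :
    X n ω = X (shift n b1 i) ω := by
  have hb1i : b1 ≠ i := by
    rintro rfl
    omega
  obtain ⟨t, h₂, hb1, hi'⟩ := exists_content_b1_nonpos_content_i_neg (by omega) hω
  have hrem := remaining_shift hb1i hb1 hi'
  refine (X_eq_of_remaining_eq (sum_shift hb1i (by omega)) hrem ?_).symm
  rwa [nonemptyBins_congr hrem]

end BallsBins
end
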